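/- Let U ⊆ A^{ℤ²} be an additive shift space that is block gluing with gap M ≥ 1, and let Ω = {Ω(n)}_{n≥1} be an expanding system of finite subsets of ℤ². Then for all k,l ≥ M+1 and all n ≥ 1, Γ(Ω(n),U) ≥ Γ(Ω_{k,l}(n),U) ≥ (Γ_{(k−M)×(l−M)}(U))^{α_{k,l}(n)}, where α_{k,l}(n) is the number of grid rectangles Z_{k×l}((ak,bl)) contained in Ω(n) and Ω_{k,l}(n) is their union. -/

import Mathlib

open Filter
open scoped Classical

/-- The `m × n` rectangular lattice `Z_{m×n}(p)` with bottom-left corner `p`. -/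
def Zrect (m n : ℕ) (p : ℤ × ℤ) : Finset (ℤ × ℤ) :=
  (Finset.range m ×ˢ Finset.range n).image (fun ab => (p.1 + (ab.1 : ℤ), p.2 + (ab.2 : ℤ)))

/-- The number of patterns of `U` seen on the finite window `L`. -/
noncomputable def patternCount {A : Type*} (U : Set ((ℤ × ℤ) → A)) (L : Finset (ℤ × ℤ)) : ℕ :=
  Set.ncard ((fun x => fun p : L => x (p : ℤ × ℤ)) '' U)

/-- An additive shift space: nonempty, closed, translation invariant. -/
def IsShiftSpace {A : Type*} [TopologicalSpace A] (U : Set ((ℤ × ℤ) → A)) : Prop :=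
  U.Nonempty ∧ IsClosed U ∧ ∀ v : ℤ × ℤ, ∀ x ∈ U, (fun p => x (p + v)) ∈ U

/-- An expanding system of finite sublattices of `ℤ²`. -/
def IsExpandingSystem (Ω : ℕ → Finset (ℤ × ℤ)) : Prop :=
  (∀ n, Ω n ⊂ Ω (n + 1)) ∧ ∀ p : ℤ × ℤ, ∃ n, p ∈ Ω n

/-- The interior of a finite lattice. -/
def latInterior (L : Finset (ℤ × ℤ)) : Finset (ℤ × ℤ) :=
  L.filter (fun p => (p.1 + 1, p.2) ∈ L ∧ (p.1, p.2 + 1) ∈ L ∧ (p.1 + 1, p.2 + 1) ∈ L)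

/-- The boundary of a finite lattice. -/
def latBoundary (L : Finset (ℤ × ℤ)) : Finset (ℤ × ℤ) := L \ latInterior L

/-- The rectangular entropy `h_r(U)`. -/
noncomputable def rectEntropy {A : Type*} (U : Set ((ℤ × ℤ) → A)) : ℝ :=
  ⨅ mn : ℕ × ℕ, (1 / (((mn.1 + 1) * (mn.2 + 1) : ℕ) : ℝ)) *
    Real.log (patternCount U (Zrect (mn.1 + 1) (mn.2 + 1) (0, 0)))

/-- The entropy `h_Ω(U)` along an expanding system `Ω`. -/
noncomputable def entropyAlong {A : Type*} (U : Set ((ℤ × ℤ) → A)) (Ω : ℕ → Finset (ℤ × ℤ)) : ℝ :=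
  Filter.limsup (fun n => (1 / ((Ω n).card : ℝ)) * Real.log (patternCount U (Ω n))) Filter.atTop

/-- `Ω_{k,l}(n)`: the union of grid rectangles `Z_{k×l}((ak,bl))` contained in `L`. -/
noncomputable def gridPart (k l : ℕ) (L : Finset (ℤ × ℤ)) : Finset (ℤ × ℤ) :=
  L.filter (fun p => ∃ a b : ℤ,
    p ∈ Zrect k l ((k : ℤ) * a, (l : ℤ) * b) ∧ Zrect k l ((k : ℤ) * a, (l : ℤ) * b) ⊆ L)

/-- `β_{k,l}` : the size of the complement of the grid part. -/
noncomputable def betaKL (k l : ℕ) (L : Finset (ℤ × ℤ)) : ℕ := (L \ gridPart k l L).card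

/-- `α_{k,l}` : the number of grid rectangles contained in `L`. -/
noncomputable def alphaKL (k l : ℕ) (L : Finset (ℤ × ℤ)) : ℕ :=
  Set.ncard {ab : ℤ × ℤ | Zrect k l ((k : ℤ) * ab.1, (l : ℤ) * ab.2) ⊆ L}

/-- A tessellation of `ℤ²`. -/
def IsTessellation (T : Finset (ℤ × ℤ)) : Prop :=
  ∃ v : ℕ → ℤ × ℤ,
    (∀ i j : ℕ, i ≠ j → Disjoint (T.image (· + v i)) (T.image (· + v j))) ∧
    ∀ p : ℤ × ℤ, ∃ i : ℕ, p ∈ T.image (· + v i)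

/-- Euclidean distance between points of `ℤ²`. -/
noncomputable def euclDist (p q : ℤ × ℤ) : ℝ :=
  Real.sqrt (((p.1 - q.1 : ℤ) : ℝ) ^ 2 + ((p.2 - q.2 : ℤ) : ℝ) ^ 2)

/-- Block gluing with gap `M`. -/
def BlockGluingWithGap {A : Type*} (U : Set ((ℤ × ℤ) → A)) (M : ℕ) : Prop :=
  ∀ (m₁ n₁ m₂ n₂ : ℕ) (c₁ c₂ : ℤ × ℤ),
    (∀ p ∈ Zrect m₁ n₁ c₁, ∀ q ∈ Zrect m₂ n₂ c₂, (M : ℝ) ≤ euclDist p q) →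
    ∀ x₁ ∈ U, ∀ x₂ ∈ U, ∃ x ∈ U,
      (∀ p ∈ Zrect m₁ n₁ c₁, x p = x₁ p) ∧ ∀ q ∈ Zrect m₂ n₂ c₂, x q = x₂ q

/-- Block gluing. -/
def IsBlockGluing {A : Type*} (U : Set ((ℤ × ℤ) → A)) : Prop :=
  ∃ M : ℕ, 1 ≤ M ∧ BlockGluingWithGap U M

/-- A full shift on a sub-alphabet. -/
def IsFullShift {A : Type*} (U : Set ((ℤ × ℤ) → A)) : Prop :=
  ∃ B : Set A, U = {x | ∀ p : ℤ × ℤ, x p ∈ B}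

/-- Shift of finite type. -/
def IsSFT {A : Type*} (U : Set ((ℤ × ℤ) → A)) : Prop :=
  ∃ (F : Finset (ℤ × ℤ)) (P : Set (F → A)),
    U = {x | ∀ v : ℤ × ℤ, (fun p : F => x (v + (p : ℤ × ℤ))) ∈ P}

/-- `(i,j)` has horizontal length `m` in `L`. -/
def HasHorizLength (L : Finset (ℤ × ℤ)) (p : ℤ × ℤ) (m : ℕ) : Prop :=
  1 ≤ m ∧ (∃ c : ℤ × ℤ, p ∈ Zrect m 1 c ∧ Zrect m 1 c ⊆ L) ∧
    ∀ m' : ℕ, m < m' → ¬ ∃ c : ℤ × ℤ, p ∈ Zrect m' 1 c ∧ Zrect m' 1 c ⊆ L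

/-- `(i,j)` has vertical length `m` in `L`. -/
def HasVertLength (L : Finset (ℤ × ℤ)) (p : ℤ × ℤ) (m : ℕ) : Prop :=
  1 ≤ m ∧ (∃ c : ℤ × ℤ, p ∈ Zrect 1 m c ∧ Zrect 1 m c ⊆ L) ∧
    ∀ m' : ℕ, m < m' → ¬ ∃ c : ℤ × ℤ, p ∈ Zrect 1 m' c ∧ Zrect 1 m' c ⊆ L

noncomputable def betaHoriz (m : ℕ) (L : Finset (ℤ × ℤ)) : ℕ :=
  (L.filter (fun p => HasHorizLength L p m)).card

noncomputable def betaVert (m : ℕ) (L : Finset (ℤ × ℤ)) : ℕ :=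
  (L.filter (fun p => HasVertLength L p m)).card

/-- The one-dimensional sublattice segment `{s • v : 0 ≤ s ≤ n-1}`. -/
def lineSegment (v : ℤ × ℤ) (n : ℕ) : Finset (ℤ × ℤ) :=
  (Finset.range n).image (fun s : ℕ => ((s : ℤ) * v.1, (s : ℤ) * v.2))

/-- The projectional entropy along the one-dimensional sublattice generated by `v`. -/
noncomputable def projEntropy {A : Type*} (U : Set ((ℤ × ℤ) → A)) (v : ℤ × ℤ) : ℝ :=
  ⨅ n : ℕ, (1 / (n + 1 : ℝ)) * Real.log (patternCount U (lineSegment v (n + 1)))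

/-- `ĥ⁽¹⁾(U)`: supremum of projectional entropies over one-dimensional sublattices. -/
noncomputable def hHatOne {A : Type*} (U : Set ((ℤ × ℤ) → A)) : ℝ :=
  ⨆ v : {w : ℤ × ℤ // w ≠ 0}, projEntropy U (v : ℤ × ℤ)

/-- The horizontal golden-mean shift. -/
def goldenMeanShift : Set ((ℤ × ℤ) → Fin 2) :=
  {x | ∀ p : ℤ × ℤ, x p * x (p.1 + 1, p.2) = 0}

/-- The sequence `a_k`: `a_1 = 2`, `a_2 = 3`, `a_k = a_{k-1} + a_{k-2}`. -/
def aSeq : ℕ → ℕ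
  | 0 => 1
  | 1 => 2
  | (k + 2) => aSeq (k + 1) + aSeq k

/-!
Every grid rectangle `Z_{k×l}((ak,bl))` inside `Ω(n)` contains the corner rectangle
`Z_{(k-M)×(l-M)}((ak,bl))`, and distinct corner rectangles are separated by strips of width `M`,
horizontally within a row of the grid and vertically between rows. Block gluing combines patterns
on two `M`-separated sets freely, so the pattern count of their union is at least the product of
the two counts. Gluing the corner rectangles of each row, then the rows, and identifying each
factor with `Γ_{(k-M)×(l-M)}(U)` by translation invariance gives the lower bound; the upper bound
is monotonicity of pattern counts under restriction.
-/

lemma mem_Zrect {m n : ℕ} {c p : ℤ × ℤ} :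
    p ∈ Zrect m n c ↔ c.1 ≤ p.1 ∧ p.1 < c.1 + m ∧ c.2 ≤ p.2 ∧ p.2 < c.2 + n := by
  simp only [Zrect, Finset.mem_image, Finset.mem_product, Finset.mem_range]
  constructor
  · rintro ⟨⟨a, b⟩, ⟨ha, hb⟩, rfl⟩
    omega
  · rintro ⟨h1, h2, h3, h4⟩
    refine ⟨((p.1 - c.1).toNat, (p.2 - c.2).toNat), ⟨by omega, by omega⟩, ?_⟩
    ext <;> simp only <;> omega

lemma Zrect_eq_image_add (m n : ℕ) (c : ℤ × ℤ) :
    Zrect m n c = (Zrect m n (0, 0)).image (· + c) := by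
  rw [Zrect, Zrect, Finset.image_image]
  congr 1
  funext ab
  ext <;> simp only [Function.comp_apply, Prod.fst_add, Prod.snd_add] <;> ring

lemma le_euclDist_of_le_fst_sub {M : ℕ} {p q : ℤ × ℤ} (h : (M : ℤ) ≤ q.1 - p.1) :
    (M : ℝ) ≤ euclDist p q := by
  have hM : (M : ℤ) ≤ |p.1 - q.1| := by
    rw [abs_sub_comm]
    exact h.trans (le_abs_self _)
  exact (Int.cast_le.mpr hM).trans
    (by rw [Int.cast_abs]; exact Real.abs_le_sqrt (le_add_of_nonneg_right (sq_nonneg _)))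

lemma le_euclDist_of_le_snd_sub {M : ℕ} {p q : ℤ × ℤ} (h : (M : ℤ) ≤ q.2 - p.2) :
    (M : ℝ) ≤ euclDist p q := by
  have hM : (M : ℤ) ≤ |p.2 - q.2| := by
    rw [abs_sub_comm]
    exact h.trans (le_abs_self _)
  exact (Int.cast_le.mpr hM).trans
    (by rw [Int.cast_abs]; exact Real.abs_le_sqrt (le_add_of_nonneg_left (sq_nonneg _)))

lemma exists_Zrect_boundingBox (L : Finset (ℤ × ℤ)) :
    ∃ m n c, L ⊆ Zrect m n c ∧ ∀ p ∈ Zrect m n c,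
      (∃ q ∈ L, q.1 ≤ p.1) ∧ (∃ q ∈ L, p.1 ≤ q.1) ∧ (∃ q ∈ L, q.2 ≤ p.2) ∧ ∃ q ∈ L, p.2 ≤ q.2 := by
  rcases L.eq_empty_or_nonempty with rfl | hL
  · exact ⟨0, 0, 0, by simp [Zrect]⟩
  obtain ⟨x₀, hx₀, hx₀min⟩ := L.exists_min_image Prod.fst hL
  obtain ⟨x₁, hx₁, hx₁max⟩ := L.exists_max_image Prod.fst hL
  obtain ⟨y₀, hy₀, hy₀min⟩ := L.exists_min_image Prod.snd hL
  obtain ⟨y₁, hy₁, hy₁max⟩ := L.exists_max_image Prod.snd hL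
  refine ⟨(x₁.1 - x₀.1 + 1).toNat, (y₁.2 - y₀.2 + 1).toNat, (x₀.1, y₀.2), fun p hp => ?_,
    fun p hp => ?_⟩
  · have := hx₀min p hp; have := hx₁max p hp; have := hy₀min p hp; have := hy₁max p hp
    rw [mem_Zrect]
    omega
  · rw [mem_Zrect] at hp
    exact ⟨⟨x₀, hx₀, hp.1⟩, ⟨x₁, hx₁, by omega⟩, ⟨y₀, hy₀, hp.2.2.1⟩, ⟨y₁, hy₁, by omega⟩⟩

def gridInnerRect (k l M : ℕ) (ab : ℤ × ℤ) : Finset (ℤ × ℤ) :=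
  Zrect (k - M) (l - M) (k * ab.1, l * ab.2)

lemma mem_gridInnerRect_bounds {k l M : ℕ} {ab p : ℤ × ℤ} (hp : p ∈ gridInnerRect k l M ab) :
    (k * ab.1 ≤ p.1 ∧ p.1 + M < k * (ab.1 + 1)) ∧ (l * ab.2 ≤ p.2 ∧ p.2 + M < l * (ab.2 + 1)) := by
  rw [gridInnerRect, mem_Zrect] at hp
  simp only [mul_add_one]
  omega

lemma gridInnerRect_subset_gridPart {k l M : ℕ} {L : Finset (ℤ × ℤ)} {ab : ℤ × ℤ}
    (h : Zrect k l (k * ab.1, l * ab.2) ⊆ L) : gridInnerRect k l M ab ⊆ gridPart k l L := by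
  intro p hp
  have hp' : p ∈ Zrect k l (k * ab.1, l * ab.2) := by
    rw [gridInnerRect, mem_Zrect] at hp
    rw [mem_Zrect]
    omega
  exact Finset.mem_filter.mpr ⟨h hp', ab.1, ab.2, hp', h⟩

lemma finite_setOf_Zrect_grid_subset {k l : ℕ} (hk : 0 < k) (hl : 0 < l) (L : Finset (ℤ × ℤ)) :
    {ab : ℤ × ℤ | Zrect k l (k * ab.1, l * ab.2) ⊆ L}.Finite := by
  have hinj : Function.Injective fun ab : ℤ × ℤ => ((k : ℤ) * ab.1, (l : ℤ) * ab.2) := by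
    intro ab ab' h
    simp only [Prod.mk.injEq] at h
    exact Prod.ext (mul_left_cancel₀ (by omega) h.1) (mul_left_cancel₀ (by omega) h.2)
  refine (L.finite_toSet.preimage hinj.injOn).subset fun ab hab => hab ?_
  show ((k : ℤ) * ab.1, (l : ℤ) * ab.2) ∈ _
  rw [mem_Zrect]
  omega

def patternSet {A : Type*} (U : Set ((ℤ × ℤ) → A)) (L : Finset (ℤ × ℤ)) : Set (L → A) :=
  (fun x => fun p : L => x (p : ℤ × ℤ)) '' U

section PatternCount

variable {A : Type*} [Fintype A] {U : Set ((ℤ × ℤ) → A)}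

omit [Fintype A] in
lemma patternCount_eq_ncard_patternSet (L : Finset (ℤ × ℤ)) :
    patternCount U L = (patternSet U L).ncard := rfl

lemma one_le_patternCount (hU : U.Nonempty) (L : Finset (ℤ × ℤ)) : 1 ≤ patternCount U L := by
  obtain ⟨x, hx⟩ := hU
  exact (Set.ncard_pos (Set.toFinite _)).mpr ⟨_, x, hx, rfl⟩

lemma patternCount_mono {L L' : Finset (ℤ × ℤ)} (h : L' ⊆ L) :
    patternCount U L' ≤ patternCount U L := by
  have hrestrict : patternSet U L' =
      (fun f : L → A => fun p : L' => f ⟨p, h p.2⟩) '' patternSet U L := by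
    rw [patternSet, patternSet, ← Set.image_comp]
    rfl
  rw [patternCount_eq_ncard_patternSet, patternCount_eq_ncard_patternSet, hrestrict]
  exact Set.ncard_image_le (Set.toFinite _)

lemma patternCount_le_image_add (hσ : ∀ v : ℤ × ℤ, ∀ x ∈ U, (fun p => x (p + v)) ∈ U)
    (L : Finset (ℤ × ℤ)) (v : ℤ × ℤ) :
    patternCount U L ≤ patternCount U (L.image (· + v)) := by
  have hmem : ∀ p : L, (p : ℤ × ℤ) + v ∈ L.image (· + v) := fun p => Finset.mem_image_of_mem _ p.2
  have hsub : patternSet U L ⊆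
      (fun f : L.image (· + v) → A => fun p : L => f ⟨p + v, hmem p⟩) ''
        patternSet U (L.image (· + v)) := by
    rintro _ ⟨x, hx, rfl⟩
    refine ⟨_, ⟨fun q => x (q + -v), hσ (-v) x hx, rfl⟩, ?_⟩
    funext p
    simp
  calc patternCount U L ≤ (_ '' patternSet U (L.image (· + v))).ncard :=
        Set.ncard_le_ncard hsub (Set.toFinite _)
    _ ≤ patternCount U (L.image (· + v)) := Set.ncard_image_le (Set.toFinite _)

lemma patternCount_Zrect_origin_le (hσ : ∀ v : ℤ × ℤ, ∀ x ∈ U, (fun p => x (p + v)) ∈ U)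
    (m n : ℕ) (c : ℤ × ℤ) : patternCount U (Zrect m n (0, 0)) ≤ patternCount U (Zrect m n c) := by
  rw [Zrect_eq_image_add m n c]
  exact patternCount_le_image_add hσ _ c

lemma patternCount_mul_le_of_Zrect {M : ℕ} (hbg : BlockGluingWithGap U M)
    {m₁ n₁ m₂ n₂ : ℕ} {c₁ c₂ : ℤ × ℤ}
    (hsep : ∀ p ∈ Zrect m₁ n₁ c₁, ∀ q ∈ Zrect m₂ n₂ c₂, (M : ℝ) ≤ euclDist p q)
    {L₁ L₂ : Finset (ℤ × ℤ)} (h₁ : L₁ ⊆ Zrect m₁ n₁ c₁) (h₂ : L₂ ⊆ Zrect m₂ n₂ c₂) :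
    patternCount U L₁ * patternCount U L₂ ≤ patternCount U (L₁ ∪ L₂) := by
  set split : ((L₁ ∪ L₂ : Finset _) → A) → (L₁ → A) × (L₂ → A) := fun f =>
    (fun p => f ⟨p, Finset.mem_union_left _ p.2⟩, fun p => f ⟨p, Finset.mem_union_right _ p.2⟩)
  have hsub : patternSet U L₁ ×ˢ patternSet U L₂ ⊆ split '' patternSet U (L₁ ∪ L₂) := by
    rintro ⟨_, _⟩ ⟨⟨y, hy, rfl⟩, ⟨z, hz, rfl⟩⟩
    obtain ⟨x, hx, hx₁, hx₂⟩ := hbg m₁ n₁ m₂ n₂ c₁ c₂ hsep y hy z hz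
    refine ⟨_, ⟨x, hx, rfl⟩, Prod.ext (funext fun p => ?_) (funext fun p => ?_)⟩
    · exact hx₁ p (h₁ p.2)
    · exact hx₂ p (h₂ p.2)
  calc patternCount U L₁ * patternCount U L₂
      = (patternSet U L₁ ×ˢ patternSet U L₂).ncard := Set.ncard_prod.symm
    _ ≤ (split '' patternSet U (L₁ ∪ L₂)).ncard := Set.ncard_le_ncard hsub (Set.toFinite _)
    _ ≤ patternCount U (L₁ ∪ L₂) := Set.ncard_image_le (Set.toFinite _)

lemma patternCount_mul_le_of_coord_sep {M : ℕ} (hbg : BlockGluingWithGap U M)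
    {π : ℤ × ℤ → ℤ} (hπ : π = Prod.fst ∨ π = Prod.snd) {L₁ L₂ : Finset (ℤ × ℤ)} {t : ℤ}
    (h₁ : ∀ p ∈ L₁, π p + M ≤ t) (h₂ : ∀ q ∈ L₂, t ≤ π q) :
    patternCount U L₁ * patternCount U L₂ ≤ patternCount U (L₁ ∪ L₂) := by
  -- Block gluing speaks only of rectangles; bounding boxes stay on the same side of `π = t`.
  obtain ⟨m₁, n₁, c₁, hL₁, hspan₁⟩ := exists_Zrect_boundingBox L₁
  obtain ⟨m₂, n₂, c₂, hL₂, hspan₂⟩ := exists_Zrect_boundingBox L₂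
  refine patternCount_mul_le_of_Zrect hbg (fun p hp q hq => ?_) hL₁ hL₂
  rcases hπ with rfl | rfl
  · obtain ⟨p', hp', hpp'⟩ := (hspan₁ p hp).2.1
    obtain ⟨q', hq', hq'q⟩ := (hspan₂ q hq).1
    have := h₁ p' hp'
    have := h₂ q' hq'
    exact le_euclDist_of_le_fst_sub (by omega)
  · obtain ⟨p', hp', hpp'⟩ := (hspan₁ p hp).2.2.2
    obtain ⟨q', hq', hq'q⟩ := (hspan₂ q hq).2.2.1
    have := h₁ p' hp'
    have := h₂ q' hq'
    exact le_euclDist_of_le_snd_sub (by omega)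

lemma prod_patternCount_le_patternCount_biUnion (hU : U.Nonempty) {M : ℕ}
    (hbg : BlockGluingWithGap U M) {π : ℤ × ℤ → ℤ} (hπ : π = Prod.fst ∨ π = Prod.snd) {w : ℕ}
    {f : ℤ → Finset (ℤ × ℤ)} (hf : ∀ i, ∀ p ∈ f i, w * i ≤ π p ∧ π p + M < w * (i + 1))
    (T : Finset ℤ) : ∏ i ∈ T, patternCount U (f i) ≤ patternCount U (T.biUnion f) := by
  induction T using Finset.induction_on_max with
  | empty => simpa using one_le_patternCount hU _
  | insert j T hlt ih =>
    have hsep : ∀ p ∈ T.biUnion f, π p + M ≤ w * j := by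
      intro p hp
      obtain ⟨i, hi, hpi⟩ := Finset.mem_biUnion.mp hp
      have : (w : ℤ) * (i + 1) ≤ w * j := by gcongr; exact hlt i hi
      linarith [(hf i p hpi).2]
    rw [Finset.prod_insert (fun h => (hlt j h).false), Finset.biUnion_insert, mul_comm,
      Finset.union_comm]
    calc (∏ i ∈ T, patternCount U (f i)) * patternCount U (f j)
        ≤ patternCount U (T.biUnion f) * patternCount U (f j) := Nat.mul_le_mul_right _ ih
      _ ≤ _ := patternCount_mul_le_of_coord_sep hbg hπ hsep fun q hq => (hf j q hq).1

lemma pow_patternCount_le_patternCount_biUnion_gridInnerRect (hU : U.Nonempty)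
    (hσ : ∀ v : ℤ × ℤ, ∀ x ∈ U, (fun p => x (p + v)) ∈ U) {M : ℕ} (hbg : BlockGluingWithGap U M)
    (k l : ℕ) (J : Finset (ℤ × ℤ)) :
    patternCount U (Zrect (k - M) (l - M) (0, 0)) ^ J.card ≤
      patternCount U (J.biUnion (gridInnerRect k l M)) := by
  set rows := J.image Prod.snd
  set cols : ℤ → Finset ℤ := fun b => (J.filter (·.2 = b)).image Prod.fst
  set rowRects : ℤ → Finset (ℤ × ℤ) := fun b => (cols b).biUnion fun a => gridInnerRect k l M (a, b)
  have hJ : ∀ ab : ℤ × ℤ, ab ∈ J ↔ ab.2 ∈ rows ∧ ab.1 ∈ cols ab.2 := by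
    intro ab
    simpa [rows, cols] using fun h : ab ∈ J => ⟨ab.1, h⟩
  calc patternCount U (Zrect (k - M) (l - M) (0, 0)) ^ J.card
      = ∏ _ab ∈ J, patternCount U (Zrect (k - M) (l - M) (0, 0)) := (Finset.prod_const _).symm
    _ ≤ ∏ ab ∈ J, patternCount U (gridInnerRect k l M ab) :=
        Finset.prod_le_prod' fun _ _ => patternCount_Zrect_origin_le hσ _ _ _
    _ = ∏ b ∈ rows, ∏ a ∈ cols b, patternCount U (gridInnerRect k l M (a, b)) :=
        Finset.prod_finset_product_right J rows cols hJ
    _ ≤ ∏ b ∈ rows, patternCount U (rowRects b) :=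
        Finset.prod_le_prod' fun b _ => prod_patternCount_le_patternCount_biUnion hU hbg
          (Or.inl rfl) (fun _ _ hp => (mem_gridInnerRect_bounds hp).1) _
    _ ≤ patternCount U (rows.biUnion rowRects) :=
        prod_patternCount_le_patternCount_biUnion hU hbg (Or.inr rfl) (fun _ _ hp => by
          obtain ⟨_, _, hp⟩ := Finset.mem_biUnion.mp hp
          exact (mem_gridInnerRect_bounds hp).2) _
    _ ≤ patternCount U (J.biUnion (gridInnerRect k l M)) := by
        refine patternCount_mono fun p hp => ?_
        simp only [rowRects, Finset.mem_biUnion] at hp ⊢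
        obtain ⟨b, -, a, ha, hp⟩ := hp
        obtain ⟨ab, hab, rfl⟩ := Finset.mem_image.mp ha
        obtain ⟨habJ, rfl⟩ := Finset.mem_filter.mp hab
        exact ⟨ab, habJ, hp⟩

end PatternCount

theorem patternCount_ge_pow_of_blockGluing_general {A : Type*} [Fintype A] [TopologicalSpace A]
    (U : Set ((ℤ × ℤ) → A)) (hU : IsShiftSpace U)
    (M : ℕ) (hbg : BlockGluingWithGap U M)
    (Ω : ℕ → Finset (ℤ × ℤ)) :
    ∀ k l n : ℕ, M + 1 ≤ k → M + 1 ≤ l →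
      patternCount U (Zrect (k - M) (l - M) (0, 0)) ^ alphaKL k l (Ω n) ≤
          patternCount U (gridPart k l (Ω n)) ∧
        patternCount U (gridPart k l (Ω n)) ≤ patternCount U (Ω n) := by
  intro k l n hk hl
  obtain ⟨hne, -, hσ⟩ := hU
  have hfin := finite_setOf_Zrect_grid_subset (by omega : 0 < k) (by omega : 0 < l) (Ω n)
  refine ⟨?_, patternCount_mono (Finset.filter_subset _ _)⟩
  calc patternCount U (Zrect (k - M) (l - M) (0, 0)) ^ alphaKL k l (Ω n)
      = patternCount U (Zrect (k - M) (l - M) (0, 0)) ^ hfin.toFinset.card := by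
        rw [alphaKL, Set.ncard_eq_toFinset_card _ hfin]
    _ ≤ patternCount U (hfin.toFinset.biUnion (gridInnerRect k l M)) :=
        pow_patternCount_le_patternCount_biUnion_gridInnerRect hne hσ hbg k l _
    _ ≤ patternCount U (gridPart k l (Ω n)) :=
        patternCount_mono (Finset.biUnion_subset.mpr fun ab hab =>
          gridInnerRect_subset_gridPart (hfin.mem_toFinset.mp hab))

/-- for a block gluing shift space with gap `M` and `k,l ≥ M+1`,
`Γ(Ω(n),U) ≥ Γ(Ω_{k,l}(n),U) ≥ (Γ_{(k−M)×(l−M)}(U))^{α_{k,l}(n)}`. -/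
theorem patternCount_ge_pow_of_blockGluing {A : Type*} [Fintype A] [TopologicalSpace A]
    [DiscreteTopology A] (hcard : 2 ≤ Fintype.card A)
    (U : Set ((ℤ × ℤ) → A)) (hU : IsShiftSpace U)
    (M : ℕ) (hM : 1 ≤ M) (hbg : BlockGluingWithGap U M)
    (Ω : ℕ → Finset (ℤ × ℤ)) (hΩ : IsExpandingSystem Ω) :
    ∀ k l n : ℕ, M + 1 ≤ k → M + 1 ≤ l →
      patternCount U (Zrect (k - M) (l - M) (0, 0)) ^ alphaKL k l (Ω n) ≤
          patternCount U (gridPart k l (Ω n)) ∧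
        patternCount U (gridPart k l (Ω n)) ≤ patternCount U (Ω n) :=
  patternCount_ge_pow_of_blockGluing_general U hU M hbg Ω
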